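/- Let X be a complex Hilbert space, (Xₙ) an increasing sequence of closed subspaces with ⋃ₙ Xₙ dense, Pₙ the orthogonal projection onto Xₙ, Qₙ = 1 − Pₙ, and H : D(H) ⊆ X → X densely defined and linear. Assume for every n: (A1) the operator x ↦ H*(Pₙx) with domain {x : Pₙx ∈ D(H*)} is densely defined; (A2) for every x ∈ D(H) and ε > 0 there is z ∈ Qₙ[D(H)] with ‖z‖ ≤ ε, Pₙx + z ∈ D(H), and Pₙ(H(Pₙx + z) − Hx) = 0; (A3) for every x ∈ D(H) and ε > 0 there is w ∈ Qₙ[D(H)] with Pₙx + w ∈ D(H) and ‖Qₙ((1 − H)(Pₙx + w))‖ ≤ ε. Let Hₙ : Pₙ[D(H)] ⊆ Xₙ → Xₙ, Hₙ(Pₙx) := Pₙ(Hx) (well-defined under (A1)–(A2)). Then: (i) if every Hₙ is dissipative, then H is dissipative; (ii) for every n, Range(1 − Hₙ) is contained in the closure of Range(1 − H); (iii) if every Hₙ is dissipative and Range(1 − Hₙ) is dense in Xₙ, then H is closable and its closure H̄ is maximal dissipative in X. -/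

import Mathlib

open scoped InnerProductSpace

variable {X : Type*} [NormedAddCommGroup X] [InnerProductSpace ℂ X] [CompleteSpace X]

/-- A (partially defined) linear operator `H` in a complex Hilbert space is *dissipative*
if `Re ⟪H x, x⟫ ≤ 0` for all `x` in its domain. -/
def IsDissipative (H : X →ₗ.[ℂ] X) : Prop :=
  ∀ x : H.domain, (⟪H x, (x : X)⟫_ℂ).re ≤ 0

/-- A dissipative operator is *maximal dissipative* if every dissipative extension of it
coincides with it. -/
def IsMaximalDissipative (H : X →ₗ.[ℂ] X) : Prop :=
  IsDissipative H ∧ ∀ K : X →ₗ.[ℂ] X, IsDissipative K → H ≤ K → K = H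

/-!
Since `Pₙ → 1` strongly and `Pₙ` is self-adjoint, `Re ⟪H x, x⟫ = lim Re ⟪Pₙ H x, Pₙ x⟫`,
which gives (i). By (A2), `Pₙ x` is a limit of points `x' ∈ D(H)` with `Pₙ H x' = Pₙ H x`,
so for `Pₙ v ∈ D(H*)` we get `⟪v, Pₙ H x⟫ = ⟪H* Pₙ v, Pₙ x⟫`; with (A1) this shows that
`Pₙ H x` depends only on `Pₙ x`. Then the points `x' - H x'` supplied by (A3) have `Pₙ`-part
`Pₙ x - Pₙ H x` and small `Qₙ`-part, which gives (ii).

For (iii): a densely defined dissipative `H` is closable, `H̄` is dissipative, and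
`‖x‖, ‖H̄ x‖ ≤ ‖(1 - H̄) x‖`, so `1 - H̄` has closed range. By (ii) that range is dense,
hence `1 - H̄` is onto; and if `1 - H̄` is onto, any dissipative extension `K` equals `H̄`
because `1 - K` is injective.
-/

open Filter Topology

namespace IsDissipative

variable {H K : X →ₗ.[ℂ] X}

omit [CompleteSpace X] in
theorem norm_sq_add_norm_sq_le (hH : IsDissipative H) (x : H.domain) :
    ‖(x : X)‖ ^ 2 + ‖H x‖ ^ 2 ≤ ‖(x : X) - H x‖ ^ 2 := by
  have hsym : (⟪(x : X), H x⟫_ℂ).re = (⟪H x, (x : X)⟫_ℂ).re :=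
    inner_re_symm (𝕜 := ℂ) (x : X) (H x)
  rw [norm_sub_sq (𝕜 := ℂ), RCLike.re_to_complex, hsym]
  linarith [hH x]

omit [CompleteSpace X] in
theorem norm_le_norm_sub (hH : IsDissipative H) (x : H.domain) :
    ‖(x : X)‖ ≤ ‖(x : X) - H x‖ :=
  le_of_pow_le_pow_left₀ two_ne_zero (norm_nonneg _)
    (by nlinarith [hH.norm_sq_add_norm_sq_le x, sq_nonneg ‖H x‖])

omit [CompleteSpace X] in
theorem norm_apply_le_norm_sub (hH : IsDissipative H) (x : H.domain) :
    ‖H x‖ ≤ ‖(x : X) - H x‖ :=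
  le_of_pow_le_pow_left₀ two_ne_zero (norm_nonneg _)
    (by nlinarith [hH.norm_sq_add_norm_sq_le x, sq_nonneg ‖(x : X)‖])

omit [CompleteSpace X] in
theorem re_inner_le_zero_of_mem_topologicalClosure (hH : IsDissipative H) {p : X × X}
    (hp : p ∈ H.graph.topologicalClosure) : (⟪p.2, p.1⟫_ℂ).re ≤ 0 := by
  refine closure_minimal (fun q hq => ?_) (isClosed_le
    (Complex.continuous_re.comp (continuous_snd.inner continuous_fst)) continuous_const) hp
  obtain ⟨x, rfl⟩ := H.mem_graph_iff'.mp hq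
  exact hH x

omit [CompleteSpace X] in
theorem closure (hH : IsDissipative H) (hc : H.IsClosable) : IsDissipative H.closure := by
  intro x
  have hx : ((x : X), H.closure x) ∈ H.graph.topologicalClosure := by
    rw [hc.graph_closure_eq_closure_graph]
    exact H.closure.mem_graph x
  exact hH.re_inner_le_zero_of_mem_topologicalClosure hx

omit [CompleteSpace X] in
/-- Adding real multiples of a point `(0, y)` of the graph closure to a graph point keeps
`Re ⟪·, ·⟫ ≤ 0`, which forces `Re ⟪y, u⟫ = 0` on the dense set `D(H)`. -/
theorem isClosable (hH : IsDissipative H) (hdense : Dense (H.domain : Set X)) :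
    H.IsClosable := by
  refine ⟨H.graph.topologicalClosure.toLinearPMap,
    (Submodule.toLinearPMap_graph_eq _ ?_).symm⟩
  rintro ⟨_, y⟩ hy (rfl : _ = 0)
  have horth : ∀ u ∈ H.domain, (⟪y, u⟫_ℂ).re = 0 := by
    intro u hu
    have hu' : (u, H ⟨u, hu⟩) ∈ H.graph.topologicalClosure :=
      H.graph.le_topologicalClosure (H.mem_graph ⟨u, hu⟩)
    have hline : ∀ s : ℝ, (⟪H ⟨u, hu⟩, u⟫_ℂ).re + s * (⟪y, u⟫_ℂ).re ≤ 0 := fun s => by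
      simpa [inner_add_left, inner_smul_left] using hH.re_inner_le_zero_of_mem_topologicalClosure
        (add_mem hu' (Submodule.smul_mem _ (s : ℂ) hy))
    by_contra hne
    have := hline ((1 - (⟪H ⟨u, hu⟩, u⟫_ℂ).re) / (⟪y, u⟫_ℂ).re)
    rw [div_mul_cancel₀ _ hne] at this
    linarith
  have hyy : (⟪y, y⟫_ℂ).re = 0 :=
    congrFun (Continuous.ext_on hdense (by fun_prop) continuous_const horth) y
  simpa using (inner_self_eq_norm_sq (𝕜 := ℂ) y).symm.trans hyy

theorem isClosed_range_sub (hH : IsDissipative H) (hc : H.IsClosed) :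
    IsClosed (Set.range fun x : H.domain => (x : X) - H x) := by
  have : CompleteSpace H.graph := hc.completeSpace_coe
  let L : H.graph →L[ℂ] X :=
    (ContinuousLinearMap.fst ℂ X X - ContinuousLinearMap.snd ℂ X X).comp H.graph.subtypeL
  have hbound : ∀ p : H.graph, ‖p‖ ≤ ‖L p‖ := by
    rintro ⟨_, hp⟩
    obtain ⟨x, rfl⟩ := H.mem_graph_iff'.mp hp
    simpa [L, Prod.norm_def] using ⟨hH.norm_le_norm_sub x, hH.norm_apply_le_norm_sub x⟩
  have hrange : Set.range L = Set.range fun x : H.domain => (x : X) - H x := by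
    ext y
    constructor
    · rintro ⟨⟨_, hp⟩, rfl⟩
      obtain ⟨x, rfl⟩ := H.mem_graph_iff'.mp hp
      exact ⟨x, rfl⟩
    · rintro ⟨x, rfl⟩
      exact ⟨⟨_, H.mem_graph x⟩, rfl⟩
  rw [← hrange]
  exact (L.antilipschitz_of_bound (K := 1) (by simpa using hbound)).isClosed_range
    L.uniformContinuous

omit [CompleteSpace X] in
theorem eq_of_le_of_surjective (hK : IsDissipative K) (hHK : H ≤ K)
    (hH : Function.Surjective fun x : H.domain => (x : X) - H x) : K = H := by
  refine (LinearPMap.eq_of_le_of_domain_eq hHK (le_antisymm hHK.1 fun u hu => ?_)).symm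
  obtain ⟨x, hx⟩ := hH (u - K ⟨u, hu⟩)
  obtain ⟨xK, hxK, hKx⟩ := LinearPMap.exists_of_le hHK x
  have hsub : ((⟨u, hu⟩ - xK : K.domain) : X) - K (⟨u, hu⟩ - xK) = 0 := by
    rw [LinearPMap.map_sub, Submodule.coe_sub, ← hxK, ← hKx, sub_sub_sub_comm, ← hx, sub_self]
  have hux : u = x := by
    have := hK.norm_le_norm_sub (⟨u, hu⟩ - xK)
    rwa [hsub, norm_zero, norm_le_zero_iff, Submodule.coe_sub, ← hxK, sub_eq_zero] at this
  exact hux ▸ x.2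

theorem isMaximalDissipative_closure (hH : IsDissipative H) (hdense : Dense (H.domain : Set X))
    (hrange : Dense (Set.range fun x : H.domain => (x : X) - H x)) :
    IsMaximalDissipative H.closure := by
  have hc := hH.isClosable hdense
  have hcH := hH.closure hc
  have hsub : (Set.range fun x : H.domain => (x : X) - H x) ⊆
      Set.range fun x : H.closure.domain => (x : X) - H.closure x := by
    rintro _ ⟨x, rfl⟩
    obtain ⟨y, hxy, hHy⟩ := LinearPMap.exists_of_le H.le_closure x
    exact ⟨y, by simp only [← hxy, ← hHy]⟩
  have hsurj : Function.Surjective fun x : H.closure.domain => (x : X) - H.closure x := by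
    rw [← Set.range_eq_univ, ← (hcH.isClosed_range_sub hc.closure_isClosed).closure_eq]
    exact (hrange.mono hsub).closure_eq
  exact ⟨hcH, fun K hK hle => hK.eq_of_le_of_surjective hle hsurj⟩

omit [CompleteSpace X] in
theorem of_tendsto_starProjection {ι : Type*} {l : Filter ι} [l.NeBot]
    (K : ι → Submodule ℂ X) [∀ i, (K i).HasOrthogonalProjection]
    (hK : ∀ x, Tendsto (fun i => (K i).starProjection x) l (𝓝 x))
    (h : ∀ i (x : H.domain),
      (⟪(K i).starProjection (H x), (K i).starProjection (x : X)⟫_ℂ).re ≤ 0) :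
    IsDissipative H := by
  intro x
  refine le_of_tendsto' ((Complex.continuous_re.tendsto _).comp
    (tendsto_const_nhds.inner (hK x))) fun i => ?_
  have hi := h i x
  rwa [Submodule.inner_starProjection_left_eq_right,
    (K i).starProjection_eq_self_iff.mpr ((K i).starProjection_apply_mem _)] at hi

end IsDissipative

section Compression

variable {K : Submodule ℂ X} [K.HasOrthogonalProjection] {H : X →ₗ.[ℂ] X} {q : X → X}

omit [CompleteSpace X] in
theorem starProjection_mem_closure_fiber {x : H.domain}
    (hA2 : ∀ ε : ℝ, 0 < ε → ∃ w : H.domain, ‖q w‖ ≤ ε ∧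
      ∃ hz : K.starProjection (x : X) + q w ∈ H.domain,
        K.starProjection (H ⟨K.starProjection (x : X) + q w, hz⟩ - H x) = 0) :
    K.starProjection (x : X) ∈ closure
      {z : X | ∃ hz : z ∈ H.domain, K.starProjection (H ⟨z, hz⟩) = K.starProjection (H x)} := by
  refine Metric.mem_closure_iff.mpr fun ε hε => ?_
  obtain ⟨w, hw, hz, hPz⟩ := hA2 (ε / 2) (half_pos hε)
  refine ⟨K.starProjection (x : X) + q w, ⟨hz, by rwa [map_sub, sub_eq_zero] at hPz⟩, ?_⟩
  rw [dist_self_add_right]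
  linarith

theorem inner_adjoint_starProjection (hdense : Dense (H.domain : Set X)) {x : H.domain}
    (hA2 : ∀ ε : ℝ, 0 < ε → ∃ w : H.domain, ‖q w‖ ≤ ε ∧
      ∃ hz : K.starProjection (x : X) + q w ∈ H.domain,
        K.starProjection (H ⟨K.starProjection (x : X) + q w, hz⟩ - H x) = 0)
    {v : X} (hv : K.starProjection v ∈ H.adjoint.domain) :
    ⟪H.adjoint ⟨K.starProjection v, hv⟩, K.starProjection (x : X)⟫_ℂ =
      ⟪v, K.starProjection (H x)⟫_ℂ := by
  refine closure_minimal ?_ (isClosed_eq (continuous_const.inner continuous_id) continuous_const)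
    (starProjection_mem_closure_fiber hA2)
  rintro z ⟨hz, hPz⟩
  rw [← hPz, ← Submodule.inner_starProjection_left_eq_right]
  exact LinearPMap.adjoint_isFormalAdjoint hdense ⟨_, hv⟩ ⟨z, hz⟩

theorem starProjection_apply_eq_of_starProjection_eq (hdense : Dense (H.domain : Set X))
    (hA1 : Dense {x : X | K.starProjection x ∈ H.adjoint.domain})
    (hA2 : ∀ (x : H.domain) (ε : ℝ), 0 < ε → ∃ w : H.domain, ‖q w‖ ≤ ε ∧
      ∃ hz : K.starProjection (x : X) + q w ∈ H.domain,
        K.starProjection (H ⟨K.starProjection (x : X) + q w, hz⟩ - H x) = 0)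
    {x₁ x₂ : H.domain} (h : K.starProjection (x₁ : X) = K.starProjection (x₂ : X)) :
    K.starProjection (H x₁) = K.starProjection (H x₂) := by
  refine ext_inner_left ℂ fun v => congrFun
    (Continuous.ext_on hA1 (continuous_id.inner continuous_const)
      (continuous_id.inner continuous_const) fun u hu => ?_) v
  dsimp only [id]
  rw [← inner_adjoint_starProjection hdense (hA2 x₁) hu,
    ← inner_adjoint_starProjection hdense (hA2 x₂) hu, h]

theorem range_starProjection_sub_subset_closure_range_sub (hdense : Dense (H.domain : Set X))
    (hA1 : Dense {x : X | K.starProjection x ∈ H.adjoint.domain})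
    (hA2 : ∀ (x : H.domain) (ε : ℝ), 0 < ε → ∃ w : H.domain, ‖q w‖ ≤ ε ∧
      ∃ hz : K.starProjection (x : X) + q w ∈ H.domain,
        K.starProjection (H ⟨K.starProjection (x : X) + q w, hz⟩ - H x) = 0)
    (hA3 : ∀ (x : H.domain) (ε : ℝ), 0 < ε → ∃ w : H.domain,
      ∃ hz : K.starProjection (x : X) + q w ∈ H.domain,
        ‖q ((K.starProjection (x : X) + q w) - H ⟨K.starProjection (x : X) + q w, hz⟩)‖ ≤ ε)
    (hq : ∀ x, q x = x - K.starProjection x) :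
    (Set.range fun x : H.domain => K.starProjection (x : X) - K.starProjection (H x)) ⊆
      closure (Set.range fun x : H.domain => (x : X) - H x) := by
  rintro _ ⟨x, rfl⟩
  refine Metric.mem_closure_iff.mpr fun ε hε => ?_
  obtain ⟨w, hz, hw⟩ := hA3 x (ε / 2) (half_pos hε)
  set x' : H.domain := ⟨_, hz⟩
  have hPx' : K.starProjection (x' : X) = K.starProjection (x : X) := by
    have hidem : ∀ y, K.starProjection (K.starProjection y) = K.starProjection y :=
      fun y => K.starProjection_eq_self_iff.mpr (K.starProjection_apply_mem y)
    simp [x', hq, hidem]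
  have hPHx' := starProjection_apply_eq_of_starProjection_eq hdense hA1 hA2 hPx'
  refine ⟨_, ⟨x', rfl⟩, ?_⟩
  dsimp only
  rw [dist_eq_norm, ← hPx', ← hPHx', ← map_sub, ← norm_neg, neg_sub, ← hq]
  linarith

end Compression

theorem stmt_18_general (Xn : ℕ → Submodule ℂ X) (hmono : Monotone Xn)
    (hUdense : Dense (⋃ m, ((Xn m : Submodule ℂ X) : Set X)))
    (P Q : ℕ → X →L[ℂ] X) (hPmem : ∀ m x, P m x ∈ Xn m)
    (hPortho : ∀ m x, x - P m x ∈ (Xn m)ᗮ)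
    (hQ : ∀ m x, Q m x = x - P m x)
    (H : X →ₗ.[ℂ] X) (hdense : Dense (H.domain : Set X))
    (hA1 : ∀ n : ℕ, Dense {x : X | P n x ∈ H.adjoint.domain})
    (hA2 : ∀ (n : ℕ) (x : H.domain) (ε : ℝ), 0 < ε → ∃ w : H.domain,
      ‖Q n (w : X)‖ ≤ ε ∧ ∃ hz : P n (x : X) + Q n (w : X) ∈ H.domain,
        P n (H ⟨P n (x : X) + Q n (w : X), hz⟩ - H x) = 0)
    (hA3 : ∀ (n : ℕ) (x : H.domain) (ε : ℝ), 0 < ε → ∃ w : H.domain,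
      ∃ hz : P n (x : X) + Q n (w : X) ∈ H.domain,
        ‖Q n ((P n (x : X) + Q n (w : X)) - H ⟨P n (x : X) + Q n (w : X), hz⟩)‖ ≤ ε) :
    ((∀ (n : ℕ) (x : H.domain), (⟪P n (H x), P n (x : X)⟫_ℂ).re ≤ 0) → IsDissipative H) ∧
    (∀ n : ℕ, {y : X | ∃ x : H.domain, P n (x : X) - P n (H x) = y} ⊆
        closure {y : X | ∃ x : H.domain, (x : X) - H x = y}) ∧
    ((∀ n : ℕ, (∀ x : H.domain, (⟪P n (H x), P n (x : X)⟫_ℂ).re ≤ 0) ∧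
        ((Xn n : Set X) ⊆ closure {y : X | ∃ x : H.domain, P n (x : X) - P n (H x) = y})) →
      (H.IsClosable ∧ IsMaximalDissipative H.closure)) := by
  have : ∀ m, (Xn m).HasOrthogonalProjection :=
    fun m => ⟨fun v => ⟨P m v, hPmem m v, hPortho m v⟩⟩
  obtain rfl : P = fun m => (Xn m).starProjection := funext fun m => ContinuousLinearMap.ext
    fun x => ((Xn m).eq_starProjection_of_mem_orthogonal (hPmem m x) (hPortho m x)).symm
  have hconv (x : X) : Tendsto (fun n => (Xn n).starProjection x) atTop (𝓝 x) :=
    Submodule.starProjection_tendsto_self Xn hmono x <|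
      (Submodule.dense_iff_topologicalClosure_eq_top.mp <|
        hUdense.mono <| Set.iUnion_subset fun n => (le_iSup Xn n :)).ge
  have part1 := IsDissipative.of_tendsto_starProjection (H := H) Xn hconv
  have part2 (n : ℕ) := range_starProjection_sub_subset_closure_range_sub
    hdense (hA1 n) (hA2 n) (hA3 n) (hQ n)
  refine ⟨part1, part2, fun hcompr => ?_⟩
  have hdiss := part1 fun n => (hcompr n).1
  refine ⟨hdiss.isClosable hdense, hdiss.isMaximalDissipative_closure hdense ?_⟩
  exact dense_closure.mp <| hUdense.mono <| Set.iUnion_subset fun n =>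
    (hcompr n).2.trans (closure_minimal (part2 n) isClosed_closure)

/-- In the setting of an increasing sequence `(Xₙ)` of closed subspaces
with dense union, orthogonal projections `Pₙ` and `Qₙ = 1 − Pₙ`, and a densely defined
linear `H` satisfying, for every `n`, the assumptions (A1), (A2), (A3), consider
`Hₙ (Pₙ x) := Pₙ (H x)` on `Pₙ[D(H)] ⊆ Xₙ`.  Then:
(i) if every `Hₙ` is dissipative, so is `H`;
(ii) `Range(1 − Hₙ) ⊆ closure (Range (1 − H))` for every `n`;
(iii) if every `Hₙ` is dissipative with `Range(1 − Hₙ)` dense in `Xₙ`, then `H` is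
closable and its closure is maximal dissipative. -/
theorem stmt_18 (Xn : ℕ → Submodule ℂ X) (hmono : Monotone Xn)
    (hXnclosed : ∀ m, IsClosed ((Xn m : Submodule ℂ X) : Set X))
    (hUdense : Dense (⋃ m, ((Xn m : Submodule ℂ X) : Set X)))
    (P Q : ℕ → X →L[ℂ] X) (hPmem : ∀ m x, P m x ∈ Xn m)
    (hPortho : ∀ m x, x - P m x ∈ (Xn m)ᗮ)
    (hQ : ∀ m x, Q m x = x - P m x)
    (H : X →ₗ.[ℂ] X) (hdense : Dense (H.domain : Set X))
    (hA1 : ∀ n : ℕ, Dense {x : X | P n x ∈ H.adjoint.domain})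
    (hA2 : ∀ (n : ℕ) (x : H.domain) (ε : ℝ), 0 < ε → ∃ w : H.domain,
      ‖Q n (w : X)‖ ≤ ε ∧ ∃ hz : P n (x : X) + Q n (w : X) ∈ H.domain,
        P n (H ⟨P n (x : X) + Q n (w : X), hz⟩ - H x) = 0)
    (hA3 : ∀ (n : ℕ) (x : H.domain) (ε : ℝ), 0 < ε → ∃ w : H.domain,
      ∃ hz : P n (x : X) + Q n (w : X) ∈ H.domain,
        ‖Q n ((P n (x : X) + Q n (w : X)) - H ⟨P n (x : X) + Q n (w : X), hz⟩)‖ ≤ ε) :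
    ((∀ (n : ℕ) (x : H.domain), (⟪P n (H x), P n (x : X)⟫_ℂ).re ≤ 0) → IsDissipative H) ∧
    (∀ n : ℕ, {y : X | ∃ x : H.domain, P n (x : X) - P n (H x) = y} ⊆
        closure {y : X | ∃ x : H.domain, (x : X) - H x = y}) ∧
    ((∀ n : ℕ, (∀ x : H.domain, (⟪P n (H x), P n (x : X)⟫_ℂ).re ≤ 0) ∧
        ((Xn n : Set X) ⊆ closure {y : X | ∃ x : H.domain, P n (x : X) - P n (H x) = y})) →
      (H.IsClosable ∧ IsMaximalDissipative H.closure)) :=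
  stmt_18_general Xn hmono hUdense P Q hPmem hPortho hQ H hdense hA1 hA2 hA3
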